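/- arXiv:2107.05986 — 3 statements merged into one kernel-verified Lean document; each statement's English description precedes it below -/
import Mathlib

section
/- Let L : ℝⁿ → ℝ be positively homogeneous of degree 2 and twice continuously differentiable at 0. Then L(v) = g(v,v) for all v, where g is one half of the Hessian of L at the zero vector; in particular L is a quadratic form. -/
/-!
Along a ray, `φ t = L (t • v)` equals `t ^ 2 * L v` for `t > 0`, while the chain rule and
`C²` regularity at `0` give `φ''(0) = D²L(0)(v, v)`. Computing `φ''(0)` from the right therefore
yields `D²L(0)(v, v) = 2 * L v`.
-/

open Set Filter Topology

theorem eq_two_smul_of_hasDerivAt_deriv_of_eqOn_Ioi {F : Type*} [NormedAddCommGroup F]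
    [NormedSpace ℝ F] {φ : ℝ → F} {c a : F} (hφ : EqOn φ (fun t => t ^ 2 • c) (Ioi 0))
    (ha : HasDerivAt (deriv φ) a 0) : a = (2 : ℝ) • c := by
  have hderiv : EqOn (deriv φ) (fun t => (2 * t) • c) (Ioi 0) := fun t ht => by
    rw [hφ.deriv isOpen_Ioi ht]
    simpa using ((hasDerivAt_pow 2 t).smul_const c).deriv
  -- `deriv φ 0` is not determined by `φ` on `Ioi 0`, but continuity of `deriv φ` at `0` pins it.
  have hderiv0 : deriv φ 0 = 0 := by
    refine tendsto_nhds_unique (f := deriv φ) (l := 𝓝[>] 0)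
      (ha.continuousAt.tendsto.mono_left nhdsWithin_le_nhds) ?_
    refine Tendsto.congr' (eventuallyEq_nhdsWithin_of_eqOn hderiv).symm ?_
    exact tendsto_nhdsWithin_of_tendsto_nhds (Continuous.tendsto' (by fun_prop) 0 0 (by simp))
  have hlin : HasDerivWithinAt (fun t : ℝ => (2 * t) • c) a (Ioi 0) 0 :=
    ha.hasDerivWithinAt.congr (fun t ht => (hderiv ht).symm) (by simp [hderiv0])
  exact (uniqueDiffWithinAt_Ioi 0).eq_deriv _ hlin
    (by simpa using ((hasDerivAt_id (0 : ℝ)).const_mul 2 |>.smul_const c).hasDerivWithinAt)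

theorem ContDiffAt.hasDerivAt_deriv_comp_smul_right {E F : Type*} [NormedAddCommGroup E]
    [NormedSpace ℝ E] [NormedAddCommGroup F] [NormedSpace ℝ F] {f : E → F}
    (hf : ContDiffAt ℝ 2 f 0) (v : E) :
    HasDerivAt (deriv fun t : ℝ => f (t • v)) (fderiv ℝ (fun x => fderiv ℝ f x v) 0 v) 0 := by
  have hline : ∀ t : ℝ, HasDerivAt (fun s : ℝ => s • v) v t := fun t => by
    simpa using (hasDerivAt_id t).smul_const v
  have hderiv : deriv (fun t : ℝ => f (t • v)) =ᶠ[𝓝 0] fun t => fderiv ℝ f (t • v) v := by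
    have hdiff_near : ∀ᶠ x in 𝓝 (0 : E), DifferentiableAt ℝ f x :=
      (hf.eventually (by norm_num)).mono fun x hx => hx.differentiableAt (by norm_num)
    have hdiff : ∀ᶠ t in 𝓝 (0 : ℝ), DifferentiableAt ℝ f (t • v) :=
      ((continuous_id.smul continuous_const).tendsto' 0 0 (zero_smul ℝ v)).eventually hdiff_near
    filter_upwards [hdiff] with t ht using (ht.hasFDerivAt.comp_hasDerivAt t (hline t)).deriv
  have hdiff2 : DifferentiableAt ℝ (fun x => fderiv ℝ f x v) 0 :=
    ((hf.fderiv_right (m := 1) (by norm_num)).differentiableAt (by norm_num)).clm_apply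
      (differentiableAt_const v)
  have hfd : HasFDerivAt (fun x => fderiv ℝ f x v) (fderiv ℝ (fun x => fderiv ℝ f x v) 0)
      ((0 : ℝ) • v) := by
    simpa using hdiff2.hasFDerivAt
  have hcomp := hfd.comp_hasDerivAt (0 : ℝ) (hline 0)
  exact hcomp.congr_of_eventuallyEq hderiv

/-- A positively 2-homogeneous function `L : ℝⁿ → ℝ` which is `C²` at `0` satisfies
`L v = g(v,v)` where `g` is half the Hessian of `L` at `0`; in particular `L` is a
quadratic form. -/
theorem stmt_3 {n : ℕ} (L : (Fin n → ℝ) → ℝ)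
    (hhom : ∀ v : Fin n → ℝ, ∀ l : ℝ, 0 < l → L (l • v) = l ^ 2 * L v)
    (hC2 : ContDiffAt ℝ 2 L 0)
    (g : (Fin n → ℝ) → (Fin n → ℝ) → ℝ)
    (hg : ∀ u w : Fin n → ℝ,
      g u w = (1 / 2) * fderiv ℝ (fun x => fderiv ℝ L x u) 0 w) :
    ∀ v : Fin n → ℝ, L v = g v v := by
  intro v
  have hhessian : fderiv ℝ (fun x => fderiv ℝ L x v) 0 v = 2 * L v :=
    eq_two_smul_of_hasDerivAt_deriv_of_eqOn_Ioi (fun t ht => hhom v t ht)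
      (hC2.hasDerivAt_deriv_comp_smul_right v)
  rw [hg, hhessian]
  ring
end

section
/- A positively homogeneous nonlinear connection is determined by its geodesics and its torsion: if two homogeneous nonlinear connections with coefficients N^a_i and M^a_i (both 1-homogeneous in y) satisfy N^a_i y^i = M^a_i y^i (same spray/geodesics) and have equal torsion tensors ∂_{y^j}N^a_i − ∂_{y^i}N^a_j = ∂_{y^j}M^a_i − ∂_{y^i}M^a_j, then N^a_i = M^a_i. -/
open Filter ContinuousLinearMap

lemma euler_aux {n : ℕ} {A : Set (Fin n → ℝ)} (hA : IsOpen A)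
    (f : (Fin n → ℝ) → ℝ) (hf : ContDiffOn ℝ (⊤ : ℕ∞) f A)
    (hhom : ∀ y ∈ A, ∀ l : ℝ, 0 < l → f (l • y) = l * f y)
    {y : Fin n → ℝ} (hy : y ∈ A) : fderiv ℝ f y y = f y := by
  have hdf : DifferentiableAt ℝ f y :=
    (hf.differentiableOn (by simp)).differentiableAt (hA.mem_nhds hy)
  have hdf' : HasFDerivAt f (fderiv ℝ f y) ((1:ℝ) • y) := by
    rw [one_smul]; exact hdf.hasFDerivAt
  have hs : HasDerivAt (fun l : ℝ => l • y) y 1 := by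
    simpa using (hasDerivAt_id (1:ℝ)).smul_const y
  have h1 : HasDerivAt (fun l : ℝ => f (l • y)) (fderiv ℝ f y y) 1 :=
    hdf'.comp_hasDerivAt 1 hs
  have hl : HasDerivAt (fun l : ℝ => l * f y) (f y) 1 := by
    simpa using (hasDerivAt_id (1:ℝ)).mul_const (f y)
  have heq : (fun l : ℝ => f (l • y)) =ᶠ[nhds 1] (fun l : ℝ => l * f y) := by
    filter_upwards [Ioi_mem_nhds (by norm_num : (0:ℝ) < 1)] with l hl
    exact hhom y hy l hl
  exact h1.unique (hl.congr_of_eventuallyEq heq)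

lemma rep_aux {n : ℕ} (f' : (Fin n → ℝ) →L[ℝ] ℝ) (y : Fin n → ℝ) :
    f' y = ∑ i, y i * f' (Pi.single i 1) := by
  have hyrep : y = ∑ i, y i • (Pi.single i 1 : Fin n → ℝ) := by
    funext k
    simp [Pi.single_apply, Finset.sum_ite_eq']
  conv_lhs => rw [hyrep]
  rw [map_sum]
  simp [smul_eq_mul]

lemma sumprod_aux {n : ℕ} (f : Fin n → (Fin n → ℝ) → ℝ) (y : Fin n → ℝ)
    (hf : ∀ i, DifferentiableAt ℝ (f i) y) :
    HasFDerivAt (fun z => ∑ i, f i z * z i)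
      (∑ i, (f i y • (ContinuousLinearMap.proj i : (Fin n → ℝ) →L[ℝ] ℝ)
        + y i • fderiv ℝ (f i) y)) y := by
  apply HasFDerivAt.fun_sum
  intro i _
  simpa [add_comm] using ((hf i).hasFDerivAt.fun_mul
    ((ContinuousLinearMap.proj i : (Fin n → ℝ) →L[ℝ] ℝ).hasFDerivAt))

/-- A homogeneous nonlinear connection is determined by its geodesics (spray) and its
torsion: if `N` and `M` (smooth, positively 1-homogeneous in `y` on a conic open set)
satisfy `N_i y^i = M_i y^i` and have equal torsions, then `N = M` on `A`. -/
theorem stmt_11 {n : ℕ} (A : Set (Fin n → ℝ)) (hA : IsOpen A)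
    (h0 : (0 : Fin n → ℝ) ∉ A)
    (hconic : ∀ y ∈ A, ∀ l : ℝ, 0 < l → l • y ∈ A)
    (N M : Fin n → (Fin n → ℝ) → ℝ)
    (hsmN : ∀ i, ContDiffOn ℝ (⊤ : ℕ∞) (N i) A)
    (hsmM : ∀ i, ContDiffOn ℝ (⊤ : ℕ∞) (M i) A)
    (hhomN : ∀ i, ∀ y ∈ A, ∀ l : ℝ, 0 < l → N i (l • y) = l * N i y)
    (hhomM : ∀ i, ∀ y ∈ A, ∀ l : ℝ, 0 < l → M i (l • y) = l * M i y)
    (hspray : ∀ y ∈ A, ∑ i, N i y * y i = ∑ i, M i y * y i)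
    (htor : ∀ y ∈ A, ∀ i j,
      fderiv ℝ (N i) y (Pi.single j 1) - fderiv ℝ (N j) y (Pi.single i 1) =
        fderiv ℝ (M i) y (Pi.single j 1) - fderiv ℝ (M j) y (Pi.single i 1)) :
    ∀ y ∈ A, ∀ i, N i y = M i y := by
  intro y hy j
  have hdN : ∀ i, DifferentiableAt ℝ (N i) y := fun i =>
    ((hsmN i).differentiableOn (by simp)).differentiableAt (hA.mem_nhds hy)
  have hdM : ∀ i, DifferentiableAt ℝ (M i) y := fun i =>
    ((hsmM i).differentiableOn (by simp)).differentiableAt (hA.mem_nhds hy)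
  have hFN := sumprod_aux N y hdN
  have hFM := sumprod_aux M y hdM
  have heq : (fun z => ∑ i, N i z * z i) =ᶠ[nhds y] (fun z => ∑ i, M i z * z i) :=
    eventually_of_mem (hA.mem_nhds hy) hspray
  have hFN' : HasFDerivAt (fun z => ∑ i, M i z * z i)
      (∑ i, (N i y • (ContinuousLinearMap.proj i : (Fin n → ℝ) →L[ℝ] ℝ)
        + y i • fderiv ℝ (N i) y)) y := hFN.congr_of_eventuallyEq heq.symm
  have hLeq := hFN'.unique hFM
  have key := congrArg (fun L : (Fin n → ℝ) →L[ℝ] ℝ => L (Pi.single j 1)) hLeq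
  simp only [ContinuousLinearMap.sum_apply, ContinuousLinearMap.add_apply,
    ContinuousLinearMap.smul_apply, ContinuousLinearMap.proj_apply,
    smul_eq_mul, Finset.sum_add_distrib] at key
  have hsingle : ∀ f : Fin n → ℝ, ∑ i, f i * (Pi.single j 1 : Fin n → ℝ) i = f j := by
    intro f
    simp [Pi.single_apply, mul_ite, Finset.sum_ite_eq']
  rw [hsingle (fun i => N i y), hsingle (fun i => M i y)] at key
  -- key : N j y + ∑ i, y i * ∂_j N_i = M j y + ∑ i, y i * ∂_j M_i
  have ht : ∀ i, y i * (fderiv ℝ (N i) y (Pi.single j 1) - fderiv ℝ (M i) y (Pi.single j 1))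
      = y i * (fderiv ℝ (N j) y (Pi.single i 1) - fderiv ℝ (M j) y (Pi.single i 1)) := by
    intro i
    have h := htor y hy i j
    have h2 : fderiv ℝ (N i) y (Pi.single j 1) - fderiv ℝ (M i) y (Pi.single j 1)
        = fderiv ℝ (N j) y (Pi.single i 1) - fderiv ℝ (M j) y (Pi.single i 1) := by linarith
    rw [h2]
  have hsum := Finset.sum_congr rfl (fun i (_ : i ∈ Finset.univ) => ht i)
  simp only [mul_sub, Finset.sum_sub_distrib] at hsum
  rw [← rep_aux (fderiv ℝ (N j) y) y, ← rep_aux (fderiv ℝ (M j) y) y] at hsum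
  rw [euler_aux hA (N j) (hsmN j) (hhomN j) hy, euler_aux hA (M j) (hsmM j) (hhomM j) hy] at hsum
  linarith
end

section
/- Given a homogeneous nonlinear connection ν with coefficients N^a_i, the set of anisotropic connections ∇ whose induced nonlinear connection (via N^a_i = Γ^a_{ij} y^j) equals ν is exactly {∇^ν + Q : Q an A-anisotropic (1,2)-tensor field with Q^a_{ij} y^j = 0}, where ∇^ν has Christoffel symbols Γ^a_{ij} = ∂_{y^j} N^a_i. -/
/-- Theorem 2(2)-(3) in one chart: given a homogeneous nonlinear connection with
coefficients `N i` (smooth, positively 1-homogeneous in `y`), the anisotropic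
connections `Γ'` inducing it (via `Γ'_{ij} y^j = N_i`) are exactly those of the form
`∂_{y^j}N_i + Q_{ij}` with `Q_{ij} y^j = 0`. -/
theorem stmt_14 {n : ℕ} (A : Set (Fin n → ℝ)) (hA : IsOpen A)
    (h0 : (0 : Fin n → ℝ) ∉ A)
    (hconic : ∀ y ∈ A, ∀ l : ℝ, 0 < l → l • y ∈ A)
    (N : Fin n → (Fin n → ℝ) → (Fin n → ℝ))
    (hsm : ∀ i, ContDiffOn ℝ (⊤ : ℕ∞) (N i) A)
    (hhom : ∀ i, ∀ y ∈ A, ∀ l : ℝ, 0 < l → N i (l • y) = l • N i y) :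
    ∀ Γ' : Fin n → Fin n → (Fin n → ℝ) → (Fin n → ℝ),
      (∀ y ∈ A, ∀ i, ∑ j, y j • Γ' i j y = N i y) ↔
      (∃ Q : Fin n → Fin n → (Fin n → ℝ) → (Fin n → ℝ),
        (∀ y ∈ A, ∀ i j, Γ' i j y =
          fderiv ℝ (N i) y (Pi.single j 1) + Q i j y) ∧
        (∀ y ∈ A, ∀ i, ∑ j, y j • Q i j y = 0)) := by
  -- Euler's identity: for y ∈ A, ∑ j, y j • ∂_{y^j} N_i y = N i y.
  have euler : ∀ i, ∀ y ∈ A, ∑ j, y j • fderiv ℝ (N i) y (Pi.single j 1) = N i y := by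
    intro i y hy
    have hd : DifferentiableAt ℝ (N i) y :=
      (((hsm i).differentiableOn (by simp)) y hy).differentiableAt (hA.mem_nhds hy)
    -- derivative of l ↦ N i (l • y) at 1
    have h1 : HasDerivAt (fun l : ℝ => N i (l • y)) (fderiv ℝ (N i) y y) 1 := by
      have hc : HasDerivAt (fun l : ℝ => l • y) y 1 := by
        simpa using (hasDerivAt_id (1 : ℝ)).smul_const y
      have hd' : HasFDerivAt (N i) (fderiv ℝ (N i) y) ((1:ℝ) • y) := by
        rw [one_smul]; exact hd.hasFDerivAt
      exact hd'.comp_hasDerivAt (1 : ℝ) hc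
    -- it agrees near 1 with l ↦ l • N i y
    have heq : (fun l : ℝ => N i (l • y)) =ᶠ[nhds 1] fun l : ℝ => l • N i y := by
      filter_upwards [Ioi_mem_nhds (by norm_num : (0:ℝ) < 1)] with l hl
      exact hhom i y hy l hl
    have h2 : HasDerivAt (fun l : ℝ => l • N i y) (N i y) 1 := by
      simpa using (hasDerivAt_id (1 : ℝ)).smul_const (N i y)
    have h1' : HasDerivAt (fun l : ℝ => l • N i y) (fderiv ℝ (N i) y y) 1 :=
      h1.congr_of_eventuallyEq heq.symm
    have hkey : fderiv ℝ (N i) y y = N i y := h1'.unique h2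
    have hysum : (∑ j, y j • (Pi.single j 1 : Fin n → ℝ)) = y := by
      ext k
      simp [Finset.sum_apply, Pi.single_apply, mul_comm]
    calc ∑ j, y j • fderiv ℝ (N i) y (Pi.single j 1)
        = fderiv ℝ (N i) y (∑ j, y j • (Pi.single j 1 : Fin n → ℝ)) := by
          rw [map_sum]
          exact Finset.sum_congr rfl fun j _ => ((fderiv ℝ (N i) y).map_smul _ _).symm
      _ = fderiv ℝ (N i) y y := by rw [hysum]
      _ = N i y := hkey
  intro Γ'
  constructor
  · intro hΓ
    refine ⟨fun i j y => Γ' i j y - fderiv ℝ (N i) y (Pi.single j 1), ?_, ?_⟩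
    · intro y hy i j; simp [sub_eq_iff_eq_add]
    · intro y hy i
      have := euler i y hy
      have h := hΓ y hy i
      calc ∑ j, y j • (Γ' i j y - fderiv ℝ (N i) y (Pi.single j 1))
          = ∑ j, (y j • Γ' i j y - y j • fderiv ℝ (N i) y (Pi.single j 1)) := by
            simp [smul_sub]
        _ = (∑ j, y j • Γ' i j y) - ∑ j, y j • fderiv ℝ (N i) y (Pi.single j 1) := by
            rw [Finset.sum_sub_distrib]
        _ = 0 := by rw [h, this, sub_self]
  · rintro ⟨Q, hQ1, hQ2⟩ y hy i
    calc ∑ j, y j • Γ' i j y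
        = ∑ j, (y j • fderiv ℝ (N i) y (Pi.single j 1) + y j • Q i j y) := by
          refine Finset.sum_congr rfl fun j _ => ?_
          rw [hQ1 y hy i j, smul_add]
      _ = (∑ j, y j • fderiv ℝ (N i) y (Pi.single j 1)) + ∑ j, y j • Q i j y := by
          rw [Finset.sum_add_distrib]
      _ = N i y := by rw [euler i y hy, hQ2 y hy i, add_zero]
end
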